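/- arXiv:1510.07204 — 4 statements merged into one kernel-verified Lean document; each statement's English description precedes it below -/
import Mathlib

section
/- Let a ≥ 0, b > 0, χ > 0, κ > 0 and T ∈ (0, ∞]. Suppose ū, w : [0, T) → (0, ∞) are differentiable and satisfy, for all t ∈ [0, T), ū′(t) = χ ū(t)((ū(t))^κ − (w(t))^κ) + ū(t)(a − b(ū(t))^κ) and w′(t) = χ w(t)((w(t))^κ − (ū(t))^κ) + w(t)(a − b(w(t))^κ), and suppose w(0) ≤ (a/b)^{1/κ} ≤ ū(0). Then w(t) ≤ (a/b)^{1/κ} ≤ ū(t) for all t ∈ [0, T). -/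
/-!
With `U = w ^ κ`, `V = ū ^ κ` and `m = a / b` the system becomes
`U' = U (κχ (U - V) - κb (U - m))`, `V' = V (κχ (V - U) - κb (V - m))`.
The Lyapunov function `G = ((U - m)₊)² + ((m - V)₊)²` is `C¹`, vanishes at time `0`, and on
`[0, t]` satisfies `G' ≤ 3κχ · sup (U + V) · G`, so Grönwall's inequality keeps it zero.
-/

open scoped ENNReal
open Set Filter Topology Asymptotics

lemma abs_posPart_sq_sub_sub_le (x y : ℝ) :
    |max y 0 ^ 2 - max x 0 ^ 2 - (y - x) * (2 * max x 0)| ≤ (y - x) ^ 2 := by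
  rw [abs_le]
  rcases le_total x 0 with hx | hx <;> rcases le_total y 0 with hy | hy <;>
    simp only [max_eq_left, max_eq_right, hx, hy] <;> constructor <;> nlinarith

lemma hasDerivAt_posPart_sq (x : ℝ) :
    HasDerivAt (fun y : ℝ => max y 0 ^ 2) (2 * max x 0) x := by
  rw [hasDerivAt_iff_isLittleO_nhds_zero]
  refine (IsBigO.of_bound 1 (Eventually.of_forall fun h => ?_)).trans_isLittleO
    (isLittleO_pow_id one_lt_two)
  simpa [Real.norm_eq_abs] using abs_posPart_sq_sub_sub_le x (x + h)

lemma nonpos_of_hasDerivWithinAt_le_mul_self {G G' : ℝ → ℝ} {K t₀ t₁ : ℝ} (ht : t₀ ≤ t₁)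
    (hG : ∀ s ∈ Icc t₀ t₁, HasDerivWithinAt G (G' s) (Icc t₀ t₁) s)
    (hG' : ∀ s ∈ Ico t₀ t₁, G' s ≤ K * G s) (hG₀ : G t₀ ≤ 0) : G t₁ ≤ 0 := by
  have hslope : ∀ s ∈ Ico t₀ t₁, ∀ r, G' s < r →
      ∃ᶠ z in 𝓝[>] s, (z - s)⁻¹ * (G z - G s) < r := fun s hs r hr => by
    simpa [slope_def_field, div_eq_inv_mul] using
      ((hG s (Ico_subset_Icc_self hs)).mono_of_mem_nhdsWithin
        (Icc_mem_nhdsGE_of_mem hs)).liminf_right_slope_le hr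
  simpa [gronwallBound_ε0_δ0] using le_gronwallBound_of_liminf_deriv_right_le (ε := 0)
    (fun s hs => (hG s hs).continuousWithinAt) hslope hG₀ (by simpa using hG') t₁
    (right_mem_Icc.2 ht)

lemma posPart_lyapunov_deriv_le {α β m x y : ℝ} (hα : 0 ≤ α) (hβ : 0 ≤ β) (hx : 0 ≤ x)
    (hy : 0 ≤ y) :
    2 * max (x - m) 0 * (x * (α * (x - y) - β * (x - m)))
        + 2 * max (m - y) 0 * -(y * (α * (y - x) - β * (y - m)))
      ≤ 3 * α * (x + y) * (max (x - m) 0 ^ 2 + max (m - y) 0 ^ 2) := by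
  have hpp : max (x - m) 0 * (x - m) = max (x - m) 0 ^ 2 := by
    rcases max_cases (x - m) 0 with ⟨h, -⟩ | ⟨h, -⟩ <;> rw [h] <;> ring
  have hqq : max (m - y) 0 * (m - y) = max (m - y) 0 ^ 2 := by
    rcases max_cases (m - y) 0 with ⟨h, -⟩ | ⟨h, -⟩ <;> rw [h] <;> ring
  have hxy : x - y ≤ max (x - m) 0 + max (m - y) 0 := by
    linarith [le_max_left (x - m) 0, le_max_left (m - y) 0]
  set p := max (x - m) 0
  set q := max (m - y) 0
  have hp : 0 ≤ p := le_max_right _ _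
  have hq : 0 ≤ q := le_max_right _ _
  calc _ = 2 * α * (x * p + y * q) * (x - y)
          - 2 * β * (x * (p * (x - m)) + y * (q * (m - y))) := by ring
    _ ≤ 2 * α * (x * p + y * q) * (p + q) := by
        rw [hpp, hqq]
        nlinarith [mul_le_mul_of_nonneg_left hxy (by positivity : 0 ≤ 2 * α * (x * p + y * q)),
          (by positivity : 0 ≤ 2 * β * (x * p ^ 2 + y * q ^ 2))]
    _ ≤ _ := by
        nlinarith [mul_nonneg (mul_nonneg hα hx) (sq_nonneg (p - q)),
          mul_nonneg (mul_nonneg hα hy) (sq_nonneg (p - q)),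
          mul_nonneg (mul_nonneg hα hx) (sq_nonneg q), mul_nonneg (mul_nonneg hα hy) (sq_nonneg p)]

theorem cross_logistic_invariant {α β m t₀ t₁ : ℝ} {U V : ℝ → ℝ} (hα : 0 ≤ α) (hβ : 0 ≤ β)
    (ht : t₀ ≤ t₁) (hU : ∀ s ∈ Icc t₀ t₁, 0 ≤ U s) (hV : ∀ s ∈ Icc t₀ t₁, 0 ≤ V s)
    (hU' : ∀ s ∈ Icc t₀ t₁,
      HasDerivWithinAt U (U s * (α * (U s - V s) - β * (U s - m))) (Icc t₀ t₁) s)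
    (hV' : ∀ s ∈ Icc t₀ t₁,
      HasDerivWithinAt V (V s * (α * (V s - U s) - β * (V s - m))) (Icc t₀ t₁) s)
    (hU₀ : U t₀ ≤ m) (hV₀ : m ≤ V t₀) : U t₁ ≤ m ∧ m ≤ V t₁ := by
  obtain ⟨C, hC⟩ := isCompact_Icc.exists_bound_of_continuousOn fun s hs =>
    (hU' s hs).continuousWithinAt.add (hV' s hs).continuousWithinAt
  have hG := fun s hs =>
    ((hasDerivAt_posPart_sq _).comp_hasDerivWithinAt s ((hU' s hs).sub_const m)).add
      ((hasDerivAt_posPart_sq _).comp_hasDerivWithinAt s ((hV' s hs).const_sub m))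
  have hG₁ := nonpos_of_hasDerivWithinAt_le_mul_self (K := 3 * α * C) ht hG (fun s hs => ?_)
    (by simp [hU₀, hV₀])
  · simp only [Pi.add_apply, Function.comp_apply] at hG₁
    constructor <;> nlinarith [sq_nonneg (max (U t₁ - m) 0), sq_nonneg (max (m - V t₁) 0),
      le_max_left (U t₁ - m) 0, le_max_left (m - V t₁) 0]
  · have hs' := Ico_subset_Icc_self hs
    calc _ ≤ 3 * α * (U s + V s) * (max (U s - m) 0 ^ 2 + max (m - V s) 0 ^ 2) :=
          posPart_lyapunov_deriv_le hα hβ (hU s hs') (hV s hs')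
      _ ≤ 3 * α * C * (max (U s - m) 0 ^ 2 + max (m - V s) 0 ^ 2) := by
          gcongr
          exact (le_abs_self _).trans (hC s hs')

lemma HasDerivWithinAt.rpow_of_chemotaxis {f g : ℝ → ℝ} {s : Set ℝ} {x a b χ κ : ℝ}
    (hb : b ≠ 0) (hx : 0 < f x)
    (hf : HasDerivWithinAt f (χ * f x * (f x ^ κ - g x ^ κ) + f x * (a - b * f x ^ κ)) s x) :
    HasDerivWithinAt (fun y => f y ^ κ)
      (f x ^ κ * (κ * χ * (f x ^ κ - g x ^ κ) - κ * b * (f x ^ κ - a / b))) s x := by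
  refine (hf.rpow_const (Or.inl hx.ne')).congr_deriv ?_
  rw [Real.rpow_sub_one hx.ne']
  field_simp
  ring

theorem stmt9_general (a b χ κ : ℝ) (ha : 0 ≤ a) (hb : 0 < b) (hχ : 0 < χ) (hκ : 0 < κ)
    (T : ℝ≥0∞)
    (ubar w : ℝ → ℝ)
    (hub : ∀ t : ℝ, 0 ≤ t → ENNReal.ofReal t < T → 0 < ubar t)
    (hwb : ∀ t : ℝ, 0 ≤ t → ENNReal.ofReal t < T → 0 < w t)
    (hud : ∀ t : ℝ, 0 ≤ t → ENNReal.ofReal t < T →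
      HasDerivWithinAt ubar
        (χ * ubar t * (ubar t ^ κ - w t ^ κ) + ubar t * (a - b * ubar t ^ κ))
        {s : ℝ | 0 ≤ s ∧ ENNReal.ofReal s < T} t)
    (hwd : ∀ t : ℝ, 0 ≤ t → ENNReal.ofReal t < T →
      HasDerivWithinAt w
        (χ * w t * (w t ^ κ - ubar t ^ κ) + w t * (a - b * w t ^ κ))
        {s : ℝ | 0 ≤ s ∧ ENNReal.ofReal s < T} t)
    (hw0 : w 0 ≤ (a / b) ^ (1 / κ)) (hu0 : (a / b) ^ (1 / κ) ≤ ubar 0) :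
    ∀ t : ℝ, 0 ≤ t → ENNReal.ofReal t < T →
      w t ≤ (a / b) ^ (1 / κ) ∧ (a / b) ^ (1 / κ) ≤ ubar t := by
  intro t ht htT
  have hsub : Icc 0 t ⊆ {s : ℝ | 0 ≤ s ∧ ENNReal.ofReal s < T} := fun s hs =>
    ⟨hs.1, (ENNReal.ofReal_le_ofReal hs.2).trans_lt htT⟩
  have hm : 0 ≤ a / b := div_nonneg ha hb.le
  have hw s (hs : s ∈ Icc 0 t) : 0 < w s := hwb s (hsub hs).1 (hsub hs).2
  have hu s (hs : s ∈ Icc 0 t) : 0 < ubar s := hub s (hsub hs).1 (hsub hs).2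
  have h0 : (0 : ℝ) ∈ Icc 0 t := left_mem_Icc.2 ht
  rw [one_div] at hw0 hu0 ⊢
  obtain ⟨hwt, hut⟩ := cross_logistic_invariant (U := fun s => w s ^ κ)
    (V := fun s => ubar s ^ κ) (by positivity : 0 ≤ κ * χ) (by positivity : 0 ≤ κ * b) ht
    (fun s hs => (Real.rpow_pos_of_pos (hw s hs) κ).le)
    (fun s hs => (Real.rpow_pos_of_pos (hu s hs) κ).le)
    (fun s hs => ((hwd s (hsub hs).1 (hsub hs).2).mono hsub).rpow_of_chemotaxis hb.ne' (hw s hs))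
    (fun s hs => ((hud s (hsub hs).1 (hsub hs).2).mono hsub).rpow_of_chemotaxis hb.ne' (hu s hs))
    ((Real.le_rpow_inv_iff_of_pos (hw 0 h0).le hm hκ).1 hw0)
    ((Real.rpow_inv_le_iff_of_pos hm (hu 0 h0).le hκ).1 hu0)
  have ht' := right_mem_Icc.2 ht
  exact ⟨(Real.le_rpow_inv_iff_of_pos (hw t ht').le hm hκ).2 hwt,
    (Real.rpow_inv_le_iff_of_pos hm (hu t ht').le hκ).2 hut⟩

/-- Steps 1–2 of the proof of Theorem 6.1: for the comparison ODE system on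
[0, T) (with T ∈ (0, ∞]) associated with f(u) = u(a − bu^κ), if
w(0) ≤ (a/b)^{1/κ} ≤ ū(0) then w(t) ≤ (a/b)^{1/κ} ≤ ū(t) for all t ∈ [0, T). -/
theorem stmt9 (a b χ κ : ℝ) (ha : 0 ≤ a) (hb : 0 < b) (hχ : 0 < χ) (hκ : 0 < κ)
    (T : ℝ≥0∞) (hT : 0 < T)
    (ubar w : ℝ → ℝ)
    (hub : ∀ t : ℝ, 0 ≤ t → ENNReal.ofReal t < T → 0 < ubar t)
    (hwb : ∀ t : ℝ, 0 ≤ t → ENNReal.ofReal t < T → 0 < w t)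
    (hud : ∀ t : ℝ, 0 ≤ t → ENNReal.ofReal t < T →
      HasDerivWithinAt ubar
        (χ * ubar t * (ubar t ^ κ - w t ^ κ) + ubar t * (a - b * ubar t ^ κ))
        {s : ℝ | 0 ≤ s ∧ ENNReal.ofReal s < T} t)
    (hwd : ∀ t : ℝ, 0 ≤ t → ENNReal.ofReal t < T →
      HasDerivWithinAt w
        (χ * w t * (w t ^ κ - ubar t ^ κ) + w t * (a - b * w t ^ κ))
        {s : ℝ | 0 ≤ s ∧ ENNReal.ofReal s < T} t)
    (hw0 : w 0 ≤ (a / b) ^ (1 / κ)) (hu0 : (a / b) ^ (1 / κ) ≤ ubar 0) :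
    ∀ t : ℝ, 0 ≤ t → ENNReal.ofReal t < T →
      w t ≤ (a / b) ^ (1 / κ) ∧ (a / b) ^ (1 / κ) ≤ ubar t :=
  stmt9_general a b χ κ ha hb hχ hκ T ubar w hub hwb hud hwd hw0 hu0
end

section
/- Let a ≥ 0, b > 0, χ > 0, κ > 0 and T ∈ (0, ∞]. Suppose ū, w : [0, T) → (0, ∞) are differentiable and satisfy, for all t ∈ [0, T), ū′(t) = χ ū(t)((ū(t))^κ − (w(t))^κ) + ū(t)(a − b(ū(t))^κ) and w′(t) = χ w(t)((w(t))^κ − (ū(t))^κ) + w(t)(a − b(w(t))^κ). Then the function t ↦ ln(ū(t)/w(t)) is differentiable on [0, T) with derivative −(b − 2χ)((ū(t))^κ − (w(t))^κ). In particular, if b ≥ 2χ and w(t) ≤ ū(t) for all t ∈ [0, T), then t ↦ ū(t)/w(t) is nonincreasing, and hence w(t) ≥ (w(0)/ū(0)) ū(t) for all t ∈ [0, T). -/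
open scoped ENNReal

/-- The differential identity (6.7) and the bound (6.8) in Step 4 of the proof
of Theorem 6.1: for the comparison ODE system on [0, T), the function
t ↦ ln(ū(t)/w(t)) has derivative −(b − 2χ)(ū(t)^κ − w(t)^κ); in particular, if
b ≥ 2χ and w ≤ ū on [0, T), then ū/w is nonincreasing on [0, T) and
w(t) ≥ (w(0)/ū(0)) ū(t). -/
theorem stmt10 (a b χ κ : ℝ) (ha : 0 ≤ a) (hb : 0 < b) (hχ : 0 < χ) (hκ : 0 < κ)
    (T : ℝ≥0∞) (hT : 0 < T)
    (ubar w : ℝ → ℝ)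
    (hub : ∀ t : ℝ, 0 ≤ t → ENNReal.ofReal t < T → 0 < ubar t)
    (hwb : ∀ t : ℝ, 0 ≤ t → ENNReal.ofReal t < T → 0 < w t)
    (hud : ∀ t : ℝ, 0 ≤ t → ENNReal.ofReal t < T →
      HasDerivWithinAt ubar
        (χ * ubar t * (ubar t ^ κ - w t ^ κ) + ubar t * (a - b * ubar t ^ κ))
        {s : ℝ | 0 ≤ s ∧ ENNReal.ofReal s < T} t)
    (hwd : ∀ t : ℝ, 0 ≤ t → ENNReal.ofReal t < T →
      HasDerivWithinAt w
        (χ * w t * (w t ^ κ - ubar t ^ κ) + w t * (a - b * w t ^ κ))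
        {s : ℝ | 0 ≤ s ∧ ENNReal.ofReal s < T} t) :
    (∀ t : ℝ, 0 ≤ t → ENNReal.ofReal t < T →
      HasDerivWithinAt (fun s => Real.log (ubar s / w s))
        (-(b - 2 * χ) * (ubar t ^ κ - w t ^ κ))
        {s : ℝ | 0 ≤ s ∧ ENNReal.ofReal s < T} t) ∧
    (2 * χ ≤ b →
      (∀ t : ℝ, 0 ≤ t → ENNReal.ofReal t < T → w t ≤ ubar t) →
      AntitoneOn (fun s => ubar s / w s) {s : ℝ | 0 ≤ s ∧ ENNReal.ofReal s < T} ∧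
      ∀ t : ℝ, 0 ≤ t → ENNReal.ofReal t < T → w 0 / ubar 0 * ubar t ≤ w t) := by
  set S : Set ℝ := {s : ℝ | 0 ≤ s ∧ ENNReal.ofReal s < T} with hS
  -- main derivative claim
  have key : ∀ t : ℝ, 0 ≤ t → ENNReal.ofReal t < T →
      HasDerivWithinAt (fun s => Real.log (ubar s / w s))
        (-(b - 2 * χ) * (ubar t ^ κ - w t ^ κ)) S t := by
    intro t ht hTt
    have hu := hub t ht hTt
    have hw := hwb t ht hTt
    have h1 : HasDerivWithinAt (fun s => Real.log (ubar s) - Real.log (w s))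
        ((χ * ubar t * (ubar t ^ κ - w t ^ κ) + ubar t * (a - b * ubar t ^ κ)) / ubar t
          - (χ * w t * (w t ^ κ - ubar t ^ κ) + w t * (a - b * w t ^ κ)) / w t) S t :=
      ((hud t ht hTt).log hu.ne').sub ((hwd t ht hTt).log hw.ne')
    have heq : (χ * ubar t * (ubar t ^ κ - w t ^ κ) + ubar t * (a - b * ubar t ^ κ)) / ubar t
          - (χ * w t * (w t ^ κ - ubar t ^ κ) + w t * (a - b * w t ^ κ)) / w t
        = -(b - 2 * χ) * (ubar t ^ κ - w t ^ κ) := by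
      field_simp
      ring
    rw [heq] at h1
    refine h1.congr (fun x hx => ?_) ?_
    · exact (Real.log_div (hub x hx.1 hx.2).ne' (hwb x hx.1 hx.2).ne').symm ▸ rfl
    · exact (Real.log_div hu.ne' hw.ne')
  refine ⟨key, fun hbχ hle => ?_⟩
  have hconv : Convex ℝ S := by
    rw [convex_iff_ordConnected]
    constructor
    intro x hx y hy z hz
    exact ⟨le_trans hx.1 hz.1, lt_of_le_of_lt (ENNReal.ofReal_le_ofReal hz.2) hy.2⟩
  -- log of ratio is antitone
  have hlogAnti : AntitoneOn (fun s => Real.log (ubar s / w s)) S := by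
    apply antitoneOn_of_hasDerivWithinAt_nonpos hconv
      (f' := fun t => -(b - 2 * χ) * (ubar t ^ κ - w t ^ κ))
    · exact fun x hx => (key x hx.1 hx.2).continuousWithinAt
    · intro x hx
      have hx' := interior_subset hx
      exact (key x hx'.1 hx'.2).mono interior_subset
    · intro x hx
      have hx' := interior_subset hx
      have hwu := hle x hx'.1 hx'.2
      have hpow : w x ^ κ ≤ ubar x ^ κ :=
        Real.rpow_le_rpow (hwb x hx'.1 hx'.2).le hwu hκ.le
      have h1 : 0 ≤ b - 2 * χ := sub_nonneg.2 hbχ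
      have : 0 ≤ (b - 2 * χ) * (ubar x ^ κ - w x ^ κ) :=
        mul_nonneg h1 (sub_nonneg.2 hpow)
      linarith
  have hAnti : AntitoneOn (fun s => ubar s / w s) S := by
    intro x hx y hy hxy
    have h := hlogAnti hx hy hxy
    have hux := hub x hx.1 hx.2
    have hwx := hwb x hx.1 hx.2
    have huy := hub y hy.1 hy.2
    have hwy := hwb y hy.1 hy.2
    have hpy : 0 < ubar y / w y := div_pos huy hwy
    have hpx : 0 < ubar x / w x := div_pos hux hwx
    exact (Real.log_le_log_iff hpy hpx).mp h
  refine ⟨hAnti, fun t ht hTt => ?_⟩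
  have h0 : (0 : ℝ) ∈ S := ⟨le_refl 0, by simpa using hT⟩
  have htS : t ∈ S := ⟨ht, hTt⟩
  have h := hAnti h0 htS ht
  have hu0 := hub 0 h0.1 h0.2
  have hw0 := hwb 0 h0.1 h0.2
  have hut := hub t ht hTt
  have hwt := hwb t ht hTt
  rw [div_le_div_iff₀ hwt hw0] at h
  rw [div_mul_eq_mul_div, div_le_iff₀ hu0]
  linarith
end

section
/- Let a > 0, κ > 0, χ > 0 and b > 2χ. Suppose ū, w : [0, ∞) → (0, ∞) are differentiable and satisfy, for all t ≥ 0, ū′(t) = χ ū(t)((ū(t))^κ − (w(t))^κ) + ū(t)(a − b(ū(t))^κ) and w′(t) = χ w(t)((w(t))^κ − (ū(t))^κ) + w(t)(a − b(w(t))^κ), and suppose w(0) ≤ (a/b)^{1/κ} ≤ ū(0). Then there exist constants C > 0 and ε > 0 such that |ū(t) − (a/b)^{1/κ}| + |w(t) − (a/b)^{1/κ}| ≤ C e^{−εt} for all t ≥ 0; in particular ū(t) and w(t) both converge exponentially to (a/b)^{1/κ} as t → ∞. -/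
/-!
With `p = ū^κ` and `q = w^κ` the system becomes the symmetric competitive Lotka–Volterra system
`p' = p (κa - κ(b - χ) p - κχ q)`, `q' = q (κa - κ(b - χ) q - κχ p)`, with coexistence
equilibrium `a / b`; `b > 2χ` says that competition is weaker than self-limitation.
Comparison arguments keep `q ≤ a / b ≤ p` and `p` bounded. The ratio `q / p` then increases,
so `(q / p)' = κ(b - 2χ) p (q / p)(1 - q / p)` makes `1 - q / p` decay exponentially. Because
`q ≤ a / b ≤ p`, the error `|p - a/b| + |q - a/b|` is exactly `p - q = p (1 - q / p)`, and the
same holds for `ū, w` after taking `κ`-th roots, which are Lipschitz on the range involved.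
-/

open Set Real

theorem nonpos_of_hasDerivWithinAt_le_mul {f f' : ℝ → ℝ} {t₀ K : ℝ}
    (hf : ∀ x, t₀ ≤ x → HasDerivWithinAt f (f' x) (Ici t₀) x) (h₀ : f t₀ ≤ 0)
    (hK : ∀ x, t₀ ≤ x → 0 ≤ f x → f' x ≤ K * f x) {x : ℝ} (hx : t₀ ≤ x) :
    f x ≤ 0 := by
  refine le_of_forall_pos_le_add fun η hη => ?_
  -- `f` stays below the barrier `η e^{L (y - x)}`, which grows strictly faster than `f` can.
  set L := |K| + 1
  have hB : ∀ y, HasDerivAt (fun y => η * exp (L * (y - x))) (L * (η * exp (L * (y - x)))) y :=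
    fun y => ((((hasDerivAt_id' y).sub_const x).const_mul L).exp.const_mul η).congr_deriv
      (by ring)
  have hle := image_le_of_deriv_right_lt_deriv_boundary
    (fun y hy => (hf y hy.1).continuousWithinAt.mono Icc_subset_Ici_self)
    (fun y hy => (hf y hy.1).mono (Ici_subset_Ici.2 hy.1))
    (h₀.trans (by positivity)) hB
    (fun y hy hfy => by
      have hpos : 0 < η * exp (L * (y - x)) := by positivity
      calc f' y ≤ K * f y := hK y hy.1 (hfy ▸ hpos.le)
        _ < L * (η * exp (L * (y - x))) := by
          rw [hfy]; exact mul_lt_mul_of_pos_right ((le_abs_self K).trans_lt (lt_add_one _)) hpos)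
    (right_mem_Icc.2 hx)
  simpa using hle

theorem le_mul_exp_of_hasDerivWithinAt_le_mul {f f' : ℝ → ℝ} {t₀ K : ℝ}
    (hf : ∀ x, t₀ ≤ x → HasDerivWithinAt f (f' x) (Ici t₀) x)
    (hK : ∀ x, t₀ ≤ x → f' x ≤ K * f x) {x : ℝ} (hx : t₀ ≤ x) :
    f x ≤ f t₀ * exp (K * (x - t₀)) := by
  have hE : ∀ y, HasDerivAt (fun y => f t₀ * exp (K * (y - t₀)))
      (K * (f t₀ * exp (K * (y - t₀)))) y := fun y =>
    ((((hasDerivAt_id' y).sub_const t₀).const_mul K).exp.const_mul (f t₀)).congr_deriv (by ring)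
  have := nonpos_of_hasDerivWithinAt_le_mul (K := K)
    (fun y hy => (hf y hy).sub (hE y).hasDerivWithinAt) (by simp)
    (fun y hy _ => by simp only [Pi.sub_apply]; linarith [hK y hy]) hx
  simpa [sub_nonpos] using this

theorem one_sub_rpow_le_max_mul {z : ℝ} (hz₀ : 0 ≤ z) (hz₁ : z ≤ 1) (γ : ℝ) :
    1 - z ^ γ ≤ max 1 γ * (1 - z) := by
  rcases le_total γ 1 with hγ | hγ
  · have := self_le_rpow_of_le_one hz₀ hz₁ hγ
    nlinarith [le_max_left 1 γ]
  · have := one_add_mul_self_le_rpow_one_add (s := z - 1) (by linarith) hγ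
    rw [add_sub_cancel] at this
    nlinarith [le_max_right 1 γ]

theorem rpow_sub_rpow_le_mul_sub {x y m M γ : ℝ} (hγ : 0 ≤ γ) (hm : 0 < m) (hmx : m ≤ x)
    (hxM : x ≤ M) (hy : 0 ≤ y) (hyx : y ≤ x) :
    x ^ γ - y ^ γ ≤ max 1 γ * M ^ γ / m * (x - y) := by
  have hx : 0 < x := hm.trans_le hmx
  have hratio := one_sub_rpow_le_max_mul (div_nonneg hy hx.le) ((div_le_one hx).2 hyx) γ
  have hsplit : x ^ γ - y ^ γ = x ^ γ * (1 - (y / x) ^ γ) := by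
    rw [div_rpow hy hx.le, mul_sub, mul_div_cancel₀ _ (rpow_pos_of_pos hx γ).ne', mul_one]
  have hxy : 1 - y / x ≤ (x - y) / m := by
    rw [one_sub_div hx.ne']
    exact div_le_div_of_nonneg_left (by linarith) hm hmx
  have hratio_nonneg : 0 ≤ 1 - (y / x) ^ γ :=
    sub_nonneg.2 (rpow_le_one (div_nonneg hy hx.le) ((div_le_one hx).2 hyx) hγ)
  calc x ^ γ - y ^ γ = x ^ γ * (1 - (y / x) ^ γ) := hsplit
    _ ≤ M ^ γ * (max 1 γ * ((x - y) / m)) :=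
      mul_le_mul (rpow_le_rpow hx.le hxM hγ)
        (hratio.trans (mul_le_mul_of_nonneg_left hxy (zero_le_one.trans (le_max_left _ _))))
        hratio_nonneg (rpow_nonneg (hx.le.trans hxM) γ)
    _ = max 1 γ * M ^ γ / m * (x - y) := by ring

theorem HasDerivWithinAt.rpow_const_of_self_mul {f : ℝ → ℝ} {g κ x : ℝ} {s : Set ℝ}
    (hf : HasDerivWithinAt f (f x * g) s x) (hx : 0 < f x) :
    HasDerivWithinAt (fun y => f y ^ κ) (κ * f x ^ κ * g) s x := by
  convert hf.rpow_const (p := κ) (Or.inl hx.ne') using 1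
  rw [rpow_sub_one hx.ne']
  field_simp

structure IsCompetitionSolution (r s c : ℝ) (p q : ℝ → ℝ) : Prop where
  left_pos : ∀ t, 0 ≤ t → 0 < p t
  right_pos : ∀ t, 0 ≤ t → 0 < q t
  hasDerivWithinAt_left : ∀ t, 0 ≤ t →
    HasDerivWithinAt p (p t * (r - s * p t - c * q t)) (Ici 0) t
  hasDerivWithinAt_right : ∀ t, 0 ≤ t →
    HasDerivWithinAt q (q t * (r - s * q t - c * p t)) (Ici 0) t

namespace IsCompetitionSolution

variable {r s c : ℝ} {p q : ℝ → ℝ}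

theorem right_le_left (h : IsCompetitionSolution r s c p q) (hs : 0 ≤ s) (h₀ : q 0 ≤ p 0)
    {t : ℝ} (ht : 0 ≤ t) : q t ≤ p t := by
  have := nonpos_of_hasDerivWithinAt_le_mul (K := r)
    (fun x hx => (h.hasDerivWithinAt_right x hx).sub (h.hasDerivWithinAt_left x hx))
    (sub_nonpos.2 h₀) (fun x hx hqp => ?_) ht
  · exact sub_nonpos.1 this
  have hsum : 0 ≤ s * (p x + q x) :=
    mul_nonneg hs (add_pos (h.left_pos x hx) (h.right_pos x hx)).le
  have hderiv : q x * (r - s * q x - c * p x) - p x * (r - s * p x - c * q x) =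
      r * (q x - p x) - s * (p x + q x) * (q x - p x) := by ring
  simp only [Pi.sub_apply] at hqp ⊢
  nlinarith [mul_nonneg hsum hqp]

theorem equilibrium_le_left (h : IsCompetitionSolution r s c p q) (hc : 0 ≤ c) (hsc : 0 < s + c)
    (hqp : ∀ t, 0 ≤ t → q t ≤ p t) (h₀ : r / (s + c) ≤ p 0) {t : ℝ} (ht : 0 ≤ t) :
    r / (s + c) ≤ p t := by
  have := nonpos_of_hasDerivWithinAt_le_mul (K := 0)
    (fun x hx => (h.hasDerivWithinAt_left x hx).const_sub (r / (s + c)))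
    (sub_nonpos.2 h₀) (fun x hx hEp => ?_) ht
  · exact sub_nonpos.1 this
  have hp := h.left_pos x hx
  have hderiv : p x * (r - s * p x - c * q x) =
      p x * (s + c) * (r / (s + c) - p x) + p x * c * (p x - q x) := by
    field_simp; ring
  nlinarith [mul_nonneg (mul_nonneg hp.le hsc.le) hEp,
    mul_nonneg (mul_nonneg hp.le hc) (sub_nonneg.2 (hqp x hx))]

theorem right_le_equilibrium (h : IsCompetitionSolution r s c p q) (hc : 0 ≤ c) (hsc : 0 < s + c)
    (hqp : ∀ t, 0 ≤ t → q t ≤ p t) (h₀ : q 0 ≤ r / (s + c)) {t : ℝ} (ht : 0 ≤ t) :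
    q t ≤ r / (s + c) := by
  have := nonpos_of_hasDerivWithinAt_le_mul (K := 0)
    (fun x hx => (h.hasDerivWithinAt_right x hx).sub_const (r / (s + c)))
    (sub_nonpos.2 h₀) (fun x hx hqE => ?_) ht
  · exact sub_nonpos.1 this
  have hq := h.right_pos x hx
  have hderiv : q x * (r - s * q x - c * p x) =
      -(q x * (s + c) * (q x - r / (s + c))) - q x * c * (p x - q x) := by
    field_simp; ring
  nlinarith [mul_nonneg (mul_nonneg hq.le hsc.le) hqE,
    mul_nonneg (mul_nonneg hq.le hc) (sub_nonneg.2 (hqp x hx))]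

theorem left_le_max (h : IsCompetitionSolution r s c p q) (hs : 0 < s) (hc : 0 ≤ c)
    {t : ℝ} (ht : 0 ≤ t) : p t ≤ max (p 0) (r / s) := by
  have := nonpos_of_hasDerivWithinAt_le_mul (K := 0)
    (fun x hx => (h.hasDerivWithinAt_left x hx).sub_const (max (p 0) (r / s)))
    (sub_nonpos.2 (le_max_left _ _)) (fun x hx hpM => ?_) ht
  · exact sub_nonpos.1 this
  have hp := h.left_pos x hx
  have hq := h.right_pos x hx
  have hsp : r ≤ s * p x := by
    rw [← div_le_iff₀' hs]; linarith [le_max_right (p 0) (r / s)]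
  nlinarith [mul_nonneg (mul_nonneg hp.le hc) hq.le]

theorem hasDerivWithinAt_ratio (h : IsCompetitionSolution r s c p q) {t : ℝ} (ht : 0 ≤ t) :
    HasDerivWithinAt (fun t => q t / p t)
      ((s - c) * p t * (q t / p t) * (1 - q t / p t)) (Ici 0) t := by
  have hp : p t ≠ 0 := (h.left_pos t ht).ne'
  refine ((h.hasDerivWithinAt_right t ht).div (h.hasDerivWithinAt_left t ht) hp).congr_deriv ?_
  field_simp
  ring

theorem initial_ratio_le (h : IsCompetitionSolution r s c p q) (hcs : c ≤ s)
    (hqp : ∀ t, 0 ≤ t → q t ≤ p t) {t : ℝ} (ht : 0 ≤ t) : q 0 / p 0 ≤ q t / p t := by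
  have := nonpos_of_hasDerivWithinAt_le_mul (K := 0)
    (fun x hx => (h.hasDerivWithinAt_ratio hx).const_sub (q 0 / p 0))
    (sub_self _).le (fun x hx _ => ?_) ht
  · exact sub_nonpos.1 this
  have hp := h.left_pos x hx
  have hρ₀ : 0 ≤ q x / p x := div_nonneg (h.right_pos x hx).le hp.le
  have hρ₁ : 0 ≤ 1 - q x / p x := sub_nonneg.2 ((div_le_one hp).2 (hqp x hx))
  rw [zero_mul, neg_nonpos]
  exact mul_nonneg (mul_nonneg (mul_nonneg (sub_nonneg.2 hcs) hp.le) hρ₀) hρ₁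

theorem one_sub_ratio_le (h : IsCompetitionSolution r s c p q) (hcs : c ≤ s)
    (hqp : ∀ t, 0 ≤ t → q t ≤ p t) {E : ℝ} (hE : ∀ t, 0 ≤ t → E ≤ p t) {t : ℝ} (ht : 0 ≤ t) :
    1 - q t / p t ≤ (1 - q 0 / p 0) * exp (-((s - c) * E * (q 0 / p 0)) * t) := by
  have := le_mul_exp_of_hasDerivWithinAt_le_mul (f := fun t => 1 - q t / p t)
    (K := -((s - c) * E * (q 0 / p 0)))
    (fun x hx => (h.hasDerivWithinAt_ratio hx).const_sub 1) (fun x hx => ?_) ht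
  · simpa using this
  have hp := h.left_pos x hx
  have hρ₁ : 0 ≤ 1 - q x / p x := sub_nonneg.2 ((div_le_one hp).2 (hqp x hx))
  have hρ : E * (q 0 / p 0) ≤ p x * (q x / p x) :=
    mul_le_mul (hE x hx) (h.initial_ratio_le hcs hqp hx)
      (div_nonneg (h.right_pos 0 le_rfl).le (h.left_pos 0 le_rfl).le) hp.le
  nlinarith [mul_le_mul_of_nonneg_left hρ (mul_nonneg (sub_nonneg.2 hcs) hρ₁)]

theorem exists_sub_le_exp (h : IsCompetitionSolution r s c p q) (hr : 0 < r) (hc : 0 ≤ c)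
    (hcs : c < s) (hq₀ : q 0 ≤ r / (s + c)) (hp₀ : r / (s + c) ≤ p 0) :
    ∃ M ε : ℝ, 0 < ε ∧ ∀ t, 0 ≤ t → q t ≤ r / (s + c) ∧ r / (s + c) ≤ p t ∧ p t ≤ M ∧
      p t - q t ≤ M * exp (-ε * t) := by
  have hs : 0 < s := hc.trans_lt hcs
  have hsc : 0 < s + c := by linarith
  have hqp : ∀ t, 0 ≤ t → q t ≤ p t := fun t ht => h.right_le_left hs.le (hq₀.trans hp₀) ht
  have hE : ∀ t, 0 ≤ t → r / (s + c) ≤ p t := fun t ht => h.equilibrium_le_left hc hsc hqp hp₀ ht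
  have hρ₀ : 0 < q 0 / p 0 := div_pos (h.right_pos 0 le_rfl) (h.left_pos 0 le_rfl)
  set M := max (p 0) (r / s)
  set ε := (s - c) * (r / (s + c)) * (q 0 / p 0)
  refine ⟨M, ε, by have := sub_pos.2 hcs; positivity, fun t ht =>
    ⟨h.right_le_equilibrium hc hsc hqp hq₀ ht, hE t ht, h.left_le_max hs hc ht, ?_⟩⟩
  have hp := h.left_pos t ht
  have hpM : p t ≤ M := h.left_le_max hs hc ht
  calc p t - q t = p t * (1 - q t / p t) := by field_simp
    _ ≤ M * ((1 - q 0 / p 0) * exp (-ε * t)) :=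
      mul_le_mul hpM (h.one_sub_ratio_le hcs.le hqp hE ht)
        (sub_nonneg.2 ((div_le_one hp).2 (hqp t ht))) (hp.le.trans hpM)
    _ ≤ M * exp (-ε * t) :=
      mul_le_mul_of_nonneg_left (mul_le_of_le_one_left (exp_pos _).le (by linarith))
        (hp.le.trans hpM)

end IsCompetitionSolution

theorem isCompetitionSolution_rpow {a b χ κ : ℝ} {ubar w : ℝ → ℝ}
    (hub : ∀ t, 0 ≤ t → 0 < ubar t) (hwb : ∀ t, 0 ≤ t → 0 < w t)
    (hud : ∀ t, 0 ≤ t → HasDerivWithinAt ubar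
      (χ * ubar t * (ubar t ^ κ - w t ^ κ) + ubar t * (a - b * ubar t ^ κ)) (Ici 0) t)
    (hwd : ∀ t, 0 ≤ t → HasDerivWithinAt w
      (χ * w t * (w t ^ κ - ubar t ^ κ) + w t * (a - b * w t ^ κ)) (Ici 0) t) :
    IsCompetitionSolution (κ * a) (κ * (b - χ)) (κ * χ)
      (fun t => ubar t ^ κ) (fun t => w t ^ κ) where
  left_pos t ht := rpow_pos_of_pos (hub t ht) κ
  right_pos t ht := rpow_pos_of_pos (hwb t ht) κ
  hasDerivWithinAt_left t ht :=
    (((hud t ht).congr_deriv (by ring)).rpow_const_of_self_mul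
      (g := χ * (ubar t ^ κ - w t ^ κ) + (a - b * ubar t ^ κ)) (hub t ht)).congr_deriv (by ring)
  hasDerivWithinAt_right t ht :=
    (((hwd t ht).congr_deriv (by ring)).rpow_const_of_self_mul
      (g := χ * (w t ^ κ - ubar t ^ κ) + (a - b * w t ^ κ)) (hwb t ht)).congr_deriv (by ring)

/-- Steps 1–4 of the proof of Theorem 6.1: for b > 2χ, the solutions of the
comparison ODE system on [0, ∞) with w(0) ≤ (a/b)^{1/κ} ≤ ū(0) both converge
exponentially to (a/b)^{1/κ}. -/
theorem stmt12 (a b χ κ : ℝ) (ha : 0 < a) (hκ : 0 < κ) (hχ : 0 < χ)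
    (hb : 2 * χ < b)
    (ubar w : ℝ → ℝ)
    (hub : ∀ t : ℝ, 0 ≤ t → 0 < ubar t)
    (hwb : ∀ t : ℝ, 0 ≤ t → 0 < w t)
    (hud : ∀ t : ℝ, 0 ≤ t →
      HasDerivWithinAt ubar
        (χ * ubar t * (ubar t ^ κ - w t ^ κ) + ubar t * (a - b * ubar t ^ κ))
        (Set.Ici 0) t)
    (hwd : ∀ t : ℝ, 0 ≤ t →
      HasDerivWithinAt w
        (χ * w t * (w t ^ κ - ubar t ^ κ) + w t * (a - b * w t ^ κ))
        (Set.Ici 0) t)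
    (hw0 : w 0 ≤ (a / b) ^ (1 / κ)) (hu0 : (a / b) ^ (1 / κ) ≤ ubar 0) :
    ∃ C : ℝ, 0 < C ∧ ∃ ε : ℝ, 0 < ε ∧ ∀ t : ℝ, 0 ≤ t →
      |ubar t - (a / b) ^ (1 / κ)| + |w t - (a / b) ^ (1 / κ)| ≤
        C * Real.exp (-ε * t) := by
  have hP : 0 < a / b := div_pos ha (by linarith)
  have hPκ : ((a / b) ^ (1 / κ)) ^ κ = a / b := by
    rw [← rpow_mul hP.le, one_div_mul_cancel hκ.ne', rpow_one]
  have hsol := isCompetitionSolution_rpow hub hwb hud hwd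
  have hE : κ * a / (κ * (b - χ) + κ * χ) = a / b := by
    rw [show κ * (b - χ) + κ * χ = κ * b by ring, mul_div_mul_left _ _ hκ.ne']
  obtain ⟨M, ε, hε, hbound⟩ := hsol.exists_sub_le_exp (by positivity) (by positivity)
    (by nlinarith) (hE ▸ hPκ ▸ rpow_le_rpow (hwb 0 le_rfl).le hw0 hκ.le)
    (hE ▸ hPκ ▸ rpow_le_rpow (rpow_nonneg hP.le _) hu0 hκ.le)
  simp only [hE] at hbound
  have hM : 0 < M := hP.trans_le ((hbound 0 le_rfl).2.1.trans (hbound 0 le_rfl).2.2.1)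
  refine ⟨max 1 (1 / κ) * M ^ (1 / κ) / (a / b) * M, by positivity, ε, hε, fun t ht => ?_⟩
  obtain ⟨hq, hp, hpM, hpq⟩ := hbound t ht
  have hwu : w t ≤ (a / b) ^ (1 / κ) :=
    (rpow_le_rpow_iff (hwb t ht).le (rpow_nonneg hP.le _) hκ).1 (by rwa [hPκ])
  have huu : (a / b) ^ (1 / κ) ≤ ubar t :=
    (rpow_le_rpow_iff (rpow_nonneg hP.le _) (hub t ht).le hκ).1 (by rwa [hPκ])
  calc |ubar t - (a / b) ^ (1 / κ)| + |w t - (a / b) ^ (1 / κ)|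
      = (ubar t ^ κ) ^ (1 / κ) - (w t ^ κ) ^ (1 / κ) := by
        rw [abs_of_nonneg (sub_nonneg.2 huu), abs_of_nonpos (sub_nonpos.2 hwu), one_div,
          rpow_rpow_inv (hub t ht).le hκ.ne', rpow_rpow_inv (hwb t ht).le hκ.ne']
        ring
    _ ≤ max 1 (1 / κ) * M ^ (1 / κ) / (a / b) * (ubar t ^ κ - w t ^ κ) :=
      rpow_sub_rpow_le_mul_sub (by positivity) hP hp hpM (rpow_nonneg (hwb t ht).le κ)
        (hq.trans hp)
    _ ≤ max 1 (1 / κ) * M ^ (1 / κ) / (a / b) * M * exp (-ε * t) := by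
      rw [mul_assoc _ M]
      exact mul_le_mul_of_nonneg_left hpq (by positivity)
end

section
/- Let a > 0, κ > 0, χ > 0 and b > 2χ. Suppose ū, w : [0, ∞) → (0, ∞) are differentiable and satisfy, for all t ≥ 0, ū′(t) = χ ū(t)((ū(t))^κ − (w(t))^κ) + ū(t)(a − b(ū(t))^κ) and w′(t) = χ w(t)((w(t))^κ − (ū(t))^κ) + w(t)(a − b(w(t))^κ), and suppose w(0) ≤ (a/b)^{1/κ} ≤ ū(0). Then, setting ε₀ := κ (b − 2χ)(a/b)((w(0))^κ/(ū(0))^κ), one has 0 ≤ ln((ū(t))^κ/(w(t))^κ) ≤ e^{−ε₀ t} ln((ū(0))^κ/(w(0))^κ) for all t ≥ 0. -/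
/-!
Pass to `p = ū^κ` and `q = w^κ`, which solve
`p' = κ p (χ (p - q) + a - b p)` and `q' = κ q (χ (q - p) + a - b q)`.
Then `L = ln (p / q)` satisfies `L' = -κ (b - 2χ) (p - q)`, whose sign is opposite to that of `L`;
hence `L ≥ 0` and `L` is nonincreasing. Once `q ≤ p`, the equation for `p` shows that the level
`a / b` is never crossed from above, so `p ≥ a / b`, and `p / q ≤ p(0) / q(0)` yields the uniform
lower bound `q ≥ (a / b) q(0) / p(0)`. Finally `p - q ≥ q ln (p / q)` turns the equation for `L`
into `L' ≤ -ε₀ L`, and Grönwall's inequality gives the exponential decay.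
-/

open Set Real

theorem nonneg_of_hasDerivWithinAt_of_neg {f f' : ℝ → ℝ} {a : ℝ}
    (hf : ∀ t, a ≤ t → HasDerivWithinAt f (f' t) (Ici a) t) (ha : 0 ≤ f a)
    (hneg : ∀ t, a ≤ t → f t < 0 → 0 ≤ f' t) : ∀ t, a ≤ t → 0 ≤ f t := by
  intro t ht
  by_contra! hft
  -- `-f` stays below each line `δ (1 + (x - a))`: at a contact point `f < 0`, so `(-f)' ≤ 0 < δ`
  have hlen : 0 < 1 + (t - a) := by linarith
  set δ := -f t / (2 * (1 + (t - a))) with hδ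
  have hδpos : 0 < δ := div_pos (neg_pos.2 hft) (by linarith)
  have hcont : ContinuousOn (fun x => -f x) (Icc a t) := fun x hx =>
    ((hf x hx.1).continuousWithinAt.mono fun y hy => hy.1).neg
  have hle := image_le_of_deriv_right_lt_deriv_boundary' hcont
    (fun x hx => ((hf x hx.1).mono (Ici_subset_Ici.2 hx.1)).neg)
    (by simp only [sub_self, add_zero, mul_one]; linarith)
    (B := fun x => δ * (1 + (x - a))) (B' := fun _ => δ) (by fun_prop)
    (fun x _ => by simpa using ((hasDerivAt_id x).sub_const a).const_add 1 |>.const_mul δ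
      |>.hasDerivWithinAt)
    (fun x hx hx' => by
      have hfx : f x < 0 := by nlinarith [hx.1]
      linarith [hneg x hx.1 hfx])
    ⟨ht, le_rfl⟩
  have : δ * (1 + (t - a)) = -f t / 2 := by rw [hδ]; field_simp
  linarith

theorem HasDerivWithinAt.rpow_const_of_deriv_eq_mul {u : ℝ → ℝ} {g κ t : ℝ} {s : Set ℝ}
    (hu : HasDerivWithinAt u (u t * g) s t) (ht : 0 < u t) :
    HasDerivWithinAt (fun x => u x ^ κ) (κ * u t ^ κ * g) s t := by
  convert hu.rpow_const (p := κ) (Or.inl ht.ne') using 1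
  rw [rpow_sub ht, rpow_one]
  field_simp

theorem mul_log_div_le_sub {x y : ℝ} (hx : 0 < x) (hy : 0 < y) : y * log (x / y) ≤ x - y := by
  have := mul_le_mul_of_nonneg_left (log_le_sub_one_of_pos (div_pos hx hy)) hy.le
  rwa [mul_sub, mul_div_cancel₀ x hy.ne', mul_one] at this

structure ComparisonSystem (a b χ κ : ℝ) (p q : ℝ → ℝ) : Prop where
  pos_left : ∀ t, 0 ≤ t → 0 < p t
  pos_right : ∀ t, 0 ≤ t → 0 < q t
  hasDerivWithinAt_left : ∀ t, 0 ≤ t →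
    HasDerivWithinAt p (κ * p t * (χ * (p t - q t) + (a - b * p t))) (Ici 0) t
  hasDerivWithinAt_right : ∀ t, 0 ≤ t →
    HasDerivWithinAt q (κ * q t * (χ * (q t - p t) + (a - b * q t))) (Ici 0) t

theorem comparisonSystem_rpow {a b χ κ : ℝ} {u v : ℝ → ℝ}
    (hu : ∀ t, 0 ≤ t → 0 < u t) (hv : ∀ t, 0 ≤ t → 0 < v t)
    (hud : ∀ t, 0 ≤ t →
      HasDerivWithinAt u (χ * u t * (u t ^ κ - v t ^ κ) + u t * (a - b * u t ^ κ)) (Ici 0) t)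
    (hvd : ∀ t, 0 ≤ t →
      HasDerivWithinAt v (χ * v t * (v t ^ κ - u t ^ κ) + v t * (a - b * v t ^ κ)) (Ici 0) t) :
    ComparisonSystem a b χ κ (fun t => u t ^ κ) (fun t => v t ^ κ) where
  pos_left t ht := rpow_pos_of_pos (hu t ht) κ
  pos_right t ht := rpow_pos_of_pos (hv t ht) κ
  hasDerivWithinAt_left t ht :=
    ((hud t ht).congr_deriv (by ring)).rpow_const_of_deriv_eq_mul (hu t ht)
  hasDerivWithinAt_right t ht :=
    ((hvd t ht).congr_deriv (by ring)).rpow_const_of_deriv_eq_mul (hv t ht)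

namespace ComparisonSystem

variable {a b χ κ : ℝ} {p q : ℝ → ℝ}

theorem hasDerivWithinAt_log_div (hs : ComparisonSystem a b χ κ p q) {t : ℝ} (ht : 0 ≤ t) :
    HasDerivWithinAt (fun x => log (p x / q x)) (-(κ * (b - 2 * χ) * (p t - q t))) (Ici 0) t := by
  have hp := (hs.pos_left t ht).ne'
  have hq := (hs.pos_right t ht).ne'
  refine (((hs.hasDerivWithinAt_left t ht).div (hs.hasDerivWithinAt_right t ht) hq).log
    (div_ne_zero hp hq)).congr_deriv ?_
  simp only [Pi.div_apply]
  field_simp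
  ring

theorem log_div_nonneg (hs : ComparisonSystem a b χ κ p q) (hκ : 0 ≤ κ) (hb : 2 * χ ≤ b)
    (h0 : q 0 ≤ p 0) : ∀ t, 0 ≤ t → 0 ≤ log (p t / q t) := by
  refine nonneg_of_hasDerivWithinAt_of_neg (fun t ht => hs.hasDerivWithinAt_log_div ht)
    (log_nonneg ((one_le_div (hs.pos_right 0 le_rfl)).2 h0)) fun t ht hneg => ?_
  have hpq : p t < q t := by
    rwa [log_neg_iff (div_pos (hs.pos_left t ht) (hs.pos_right t ht)),
      div_lt_one (hs.pos_right t ht)] at hneg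
  exact neg_nonneg.2 (mul_nonpos_of_nonneg_of_nonpos (mul_nonneg hκ (by linarith)) (by linarith))

theorem right_le_left (hs : ComparisonSystem a b χ κ p q) (hκ : 0 ≤ κ) (hb : 2 * χ ≤ b)
    (h0 : q 0 ≤ p 0) {t : ℝ} (ht : 0 ≤ t) : q t ≤ p t := by
  have := hs.log_div_nonneg hκ hb h0 t ht
  rwa [log_nonneg_iff (div_pos (hs.pos_left t ht) (hs.pos_right t ht)),
    one_le_div (hs.pos_right t ht)] at this

theorem div_le_left (hs : ComparisonSystem a b χ κ p q) (hκ : 0 ≤ κ) (hχ : 0 ≤ χ)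
    (hb : 2 * χ ≤ b) (hp0 : a / b ≤ p 0) (h0 : q 0 ≤ p 0) : ∀ t, 0 ≤ t → a / b ≤ p t := by
  have hlevel := nonneg_of_hasDerivWithinAt_of_neg
    (fun t ht => (hs.hasDerivWithinAt_left t ht).sub_const (a / b)) (sub_nonneg.2 hp0)
    fun t ht hlt => ?_
  · exact fun t ht => sub_nonneg.1 (hlevel t ht)
  have hpt := hs.pos_left t ht
  have hbp : b * p t ≤ a := by
    rcases (show 0 ≤ b by linarith).eq_or_lt with rfl | hb0
    · simp only [div_zero, sub_zero] at hlt
      linarith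
    · rw [sub_neg, lt_div_iff₀ hb0] at hlt
      linarith
  have hqp := hs.right_le_left hκ hb h0 ht
  have : 0 ≤ χ * (p t - q t) := mul_nonneg hχ (by linarith)
  exact mul_nonneg (mul_nonneg hκ hpt.le) (by linarith)

theorem antitoneOn_log_div (hs : ComparisonSystem a b χ κ p q) (hκ : 0 ≤ κ) (hb : 2 * χ ≤ b)
    (h0 : q 0 ≤ p 0) : AntitoneOn (fun t => log (p t / q t)) (Ici 0) := by
  refine antitoneOn_of_hasDerivWithinAt_nonpos (f' := fun t => -(κ * (b - 2 * χ) * (p t - q t)))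
    (convex_Ici 0) (fun t ht => (hs.hasDerivWithinAt_log_div ht).continuousWithinAt)
    (fun t ht => ?_) fun t ht => ?_
  · rw [interior_Ici] at ht ⊢
    exact (hs.hasDerivWithinAt_log_div ht.le).mono Ioi_subset_Ici_self
  · rw [interior_Ici] at ht
    have hqp := hs.right_le_left hκ hb h0 ht.le
    exact neg_nonpos.2 (mul_nonneg (mul_nonneg hκ (by linarith)) (by linarith))

theorem div_mul_div_le_right (hs : ComparisonSystem a b χ κ p q) (hκ : 0 ≤ κ) (hχ : 0 ≤ χ)
    (hb : 2 * χ ≤ b) (hp0 : a / b ≤ p 0) (h0 : q 0 ≤ p 0) {t : ℝ} (ht : 0 ≤ t) :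
    a / b * (q 0 / p 0) ≤ q t := by
  have hp0pos := hs.pos_left 0 le_rfl
  have hq0pos := hs.pos_right 0 le_rfl
  have hpt := hs.pos_left t ht
  have hqt := hs.pos_right t ht
  have hratio : p t / q t ≤ p 0 / q 0 := by
    rw [← log_le_log_iff (div_pos hpt hqt) (div_pos hp0pos hq0pos)]
    exact hs.antitoneOn_log_div hκ hb h0 self_mem_Ici ht ht
  rw [div_le_div_iff₀ hqt hq0pos] at hratio
  rw [← mul_div_assoc, div_le_iff₀ hp0pos]
  calc a / b * q 0 ≤ p t * q 0 := by gcongr; exact hs.div_le_left hκ hχ hb hp0 h0 t ht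
    _ ≤ q t * p 0 := by linarith

theorem log_div_le_exp_mul (hs : ComparisonSystem a b χ κ p q) (hκ : 0 ≤ κ) (hχ : 0 ≤ χ)
    (hb : 2 * χ ≤ b) (hp0 : a / b ≤ p 0) (hq0 : q 0 ≤ a / b) {t : ℝ} (ht : 0 ≤ t) :
    log (p t / q t) ≤
      exp (-(κ * (b - 2 * χ) * (a / b) * (q 0 / p 0)) * t) * log (p 0 / q 0) := by
  have h0 : q 0 ≤ p 0 := hq0.trans hp0
  set ε := κ * (b - 2 * χ) * (a / b) * (q 0 / p 0)
  have hdecay : ∀ x ∈ Ico 0 t,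
      -(κ * (b - 2 * χ) * (p x - q x)) ≤ -ε * log (p x / q x) + 0 := by
    intro x hx
    have hc : 0 ≤ κ * (b - 2 * χ) := mul_nonneg hκ (by linarith)
    have hL := hs.log_div_nonneg hκ hb h0 x hx.1
    have hqL := mul_log_div_le_sub (hs.pos_left x hx.1) (hs.pos_right x hx.1)
    have hεq : ε ≤ κ * (b - 2 * χ) * q x := by
      have := mul_le_mul_of_nonneg_left (hs.div_mul_div_le_right hκ hχ hb hp0 h0 hx.1) hc
      linarith
    linarith [mul_le_mul_of_nonneg_left hqL hc, mul_le_mul_of_nonneg_right hεq hL]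
  have hgronwall := le_gronwallBound_of_liminf_deriv_right_le
    (fun x hx => (hs.hasDerivWithinAt_log_div hx.1).continuousWithinAt.mono Icc_subset_Ici_self)
    (fun x hx r hr =>
      ((hs.hasDerivWithinAt_log_div hx.1).mono (Ici_subset_Ici.2 hx.1)).liminf_right_slope_le hr)
    le_rfl hdecay t ⟨ht, le_rfl⟩
  rwa [gronwallBound_ε0, sub_zero, mul_comm] at hgronwall

end ComparisonSystem

/-- The explicit exponential decay estimate of Step 4 of the proof of
Theorem 6.1: with ε₀ = κ(b − 2χ)(a/b)(w(0)^κ/ū(0)^κ), one has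
0 ≤ ln(ū(t)^κ/w(t)^κ) ≤ e^{−ε₀ t} ln(ū(0)^κ/w(0)^κ) for all t ≥ 0. -/
theorem stmt13 (a b χ κ : ℝ) (ha : 0 < a) (hκ : 0 < κ) (hχ : 0 < χ)
    (hb : 2 * χ < b)
    (ubar w : ℝ → ℝ)
    (hub : ∀ t : ℝ, 0 ≤ t → 0 < ubar t)
    (hwb : ∀ t : ℝ, 0 ≤ t → 0 < w t)
    (hud : ∀ t : ℝ, 0 ≤ t →
      HasDerivWithinAt ubar
        (χ * ubar t * (ubar t ^ κ - w t ^ κ) + ubar t * (a - b * ubar t ^ κ))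
        (Set.Ici 0) t)
    (hwd : ∀ t : ℝ, 0 ≤ t →
      HasDerivWithinAt w
        (χ * w t * (w t ^ κ - ubar t ^ κ) + w t * (a - b * w t ^ κ))
        (Set.Ici 0) t)
    (hw0 : w 0 ≤ (a / b) ^ (1 / κ)) (hu0 : (a / b) ^ (1 / κ) ≤ ubar 0) :
    ∀ t : ℝ, 0 ≤ t →
      0 ≤ Real.log (ubar t ^ κ / w t ^ κ) ∧
      Real.log (ubar t ^ κ / w t ^ κ) ≤
        Real.exp (-(κ * (b - 2 * χ) * (a / b) * (w 0 ^ κ / ubar 0 ^ κ)) * t) *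
          Real.log (ubar 0 ^ κ / w 0 ^ κ) := by
  have hs : ComparisonSystem a b χ κ (fun t => ubar t ^ κ) (fun t => w t ^ κ) :=
    comparisonSystem_rpow hub hwb hud hwd
  have hab : 0 ≤ a / b := (div_pos ha (by linarith)).le
  have hlevel : ((a / b) ^ (1 / κ)) ^ κ = a / b := by rw [one_div, rpow_inv_rpow hab hκ.ne']
  have hp0 : a / b ≤ ubar 0 ^ κ := hlevel ▸ rpow_le_rpow (rpow_nonneg hab _) hu0 hκ.le
  have hq0 : w 0 ^ κ ≤ a / b := hlevel ▸ rpow_le_rpow (hwb 0 le_rfl).le hw0 hκ.le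
  intro t ht
  exact ⟨hs.log_div_nonneg hκ.le hb.le (hq0.trans hp0) t ht,
    hs.log_div_le_exp_mul hκ.le hχ.le hb.le hp0 hq0 ht⟩
end
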